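/- arXiv:2204.01448 — 3 statements merged into one kernel-verified Lean document; each statement's English description precedes it below -/
import Mathlib

section
/- Assume (A1): σ_min(Dh(x)) ≥ σ̲ > 0 on C := {x : ‖h(x)‖ ≤ R}; (A2): M := {x : h(x) = 0} and C are compact; (A3): ‖h(x+v) − h(x) − Dh(x)[v]‖ ≤ C_h‖v‖² for all x ∈ C, v ∈ E. Let x ∈ C with β > max{β₁(x), β₂(x), β₃(x)} and ‖∇g(x)‖ ≤ ε₁, where 0 ≤ ε₁ ≤ R/2. Let d ∈ E with ‖d‖ = 1, ⟨d, ∇g(x)⟩ ≤ 0 and ⟨d, ∇²g(x)[d]⟩ < −ε₂ for some ε₂ > 0, and let c₂ ∈ (0, 1/2). Then for every α with 0 < α ≤ min( 3(1−2c₂)·|⟨d, ∇²g(x)[d]⟩| / M_g , t₂(x) ), the point x + α·d lies in C and g(x) − g(x + α d) ≥ −c₂·α²·⟨d, ∇²g(x)[d]⟩, where M_g := max_{y∈C} ‖∇³g(y)‖ and t₂(x) := ( −σ₁(Dh(x)) + √(σ₁(Dh(x))² + 2C_h R) ) / (2C_h). -/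
open scoped RealInnerProductSpace ContDiff

noncomputable section

variable {E : Type*} [NormedAddCommGroup E] [InnerProductSpace ℝ E] [FiniteDimensional ℝ E] {m : ℕ}

/-- The least-squares multipliers `λ(x) = (Dh(x) ∘ Dh(x)*)⁻¹ (Dh(x)[∇f(x)]) = (Dh(x)*)† ∇f(x)`.
(When `Dh(x)` is surjective, `Dh(x) ∘ Dh(x)*` is bijective and `Function.invFun` returns
its genuine inverse applied to `Dh(x)[∇f(x)]`.) -/
def lam (f : E → ℝ) (h : E → EuclideanSpace ℝ (Fin m)) (x : E) : EuclideanSpace ℝ (Fin m) :=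
  Function.invFun
    (fun y => fderiv ℝ h x (ContinuousLinearMap.adjoint (fderiv ℝ h x) y))
    (fderiv ℝ h x (gradient f x))

/-- Fletcher's augmented Lagrangian `g(x) = f(x) − ⟪λ(x), h(x)⟫ + β‖h(x)‖²`. -/
def flal (f : E → ℝ) (h : E → EuclideanSpace ℝ (Fin m)) (β : ℝ) (x : E) : ℝ :=
  f x - ⟪lam f h x, h x⟫ + β * ‖h x‖ ^ 2

/-- The smallest singular value `σ_min(A) = min_{‖y‖=1} ‖A*[y]‖` of a linear map. -/
def sigmaMin (A : E →L[ℝ] EuclideanSpace ℝ (Fin m)) : ℝ :=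
  sInf ((fun y => ‖ContinuousLinearMap.adjoint A y‖) '' {y : EuclideanSpace ℝ (Fin m) | ‖y‖ = 1})

/-- `C_λ(x) = ‖Dλ(x)‖`, the operator norm of the derivative of the multipliers. -/
def Clam (f : E → ℝ) (h : E → EuclideanSpace ℝ (Fin m)) (x : E) : ℝ :=
  ‖fderiv ℝ (lam f h) x‖

/-- `β₁(x) = σ₁(Dh(x))·C_λ(x) / (2σ_min(Dh(x))²)`. -/
def beta1 (f : E → ℝ) (h : E → EuclideanSpace ℝ (Fin m)) (x : E) : ℝ :=
  ‖fderiv ℝ h x‖ * Clam f h x / (2 * sigmaMin (fderiv ℝ h x) ^ 2)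

/-- `β₂(x) = C_λ(x)/σ_min(Dh(x))`. -/
def beta2 (f : E → ℝ) (h : E → EuclideanSpace ℝ (Fin m)) (x : E) : ℝ :=
  Clam f h x / sigmaMin (fderiv ℝ h x)

/-- `β₃(x) = 1/σ_min(Dh(x))`. -/
def beta3 (h : E → EuclideanSpace ℝ (Fin m)) (x : E) : ℝ :=
  1 / sigmaMin (fderiv ℝ h x)

open Classical in
/-- The step-size bound `t₁(x)` of Proposition 3.2 (gradient steps stay in `C`); when
`∇g(x) = 0` the first two entries of the minimum are `+∞`, so only the third remains. -/
def t1 (f : E → ℝ) (h : E → EuclideanSpace ℝ (Fin m)) (β R Ch : ℝ) (x : E) : ℝ :=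
  if gradient (flal f h β) x = 0 then 1 / (2 * β * ‖fderiv ℝ h x‖ ^ 2)
  else
    min (Real.sqrt (R / (2 * Ch)) / ‖gradient (flal f h β) x‖)
      (min ((2 * β * sigmaMin (fderiv ℝ h x) ^ 2 - ‖fderiv ℝ h x‖ * Clam f h x) * R /
          (2 * Ch * ‖gradient (flal f h β) x‖ ^ 2))
        (1 / (2 * β * ‖fderiv ℝ h x‖ ^ 2)))

/-- The step-size bound `t₂(x)` of Proposition 3.4 (eigensteps stay in `C`). -/
def t2 (h : E → EuclideanSpace ℝ (Fin m)) (R Ch : ℝ) (x : E) : ℝ :=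
  (-‖fderiv ℝ h x‖ + Real.sqrt (‖fderiv ℝ h x‖ ^ 2 + 2 * Ch * R)) / (2 * Ch)

/-- `L_g = max_{y ∈ C} ‖∇²g(y)‖`. -/
def Lg (f : E → ℝ) (h : E → EuclideanSpace ℝ (Fin m)) (β R : ℝ) : ℝ :=
  sSup ((fun y => ‖fderiv ℝ (gradient (flal f h β)) y‖) '' {y : E | ‖h y‖ ≤ R})

/-- `M_g = max_{y ∈ C} ‖∇³g(y)‖`. -/
def Mg (f : E → ℝ) (h : E → EuclideanSpace ℝ (Fin m)) (β R : ℝ) : ℝ :=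
  sSup ((fun y => ‖iteratedFDeriv ℝ 3 (flal f h β) y‖) '' {y : E | ‖h y‖ ≤ R})

open ContinuousLinearMap in
lemma sigmaMin_mul_norm_le (A : E →L[ℝ] EuclideanSpace ℝ (Fin m))
    (w : EuclideanSpace ℝ (Fin m)) :
    sigmaMin A * ‖w‖ ≤ ‖ContinuousLinearMap.adjoint A w‖ := by
  rcases eq_or_ne w 0 with rfl | hw
  · simp [sigmaMin]
  · have hnw : (0:ℝ) < ‖w‖ := norm_pos_iff.2 hw
    have h1 : ‖‖w‖⁻¹ • w‖ = 1 := by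
      rw [norm_smul, norm_inv, norm_norm, inv_mul_cancel₀ hnw.ne']
    have h2 : sigmaMin A ≤ ‖ContinuousLinearMap.adjoint A (‖w‖⁻¹ • w)‖ := by
      apply csInf_le
      · exact ⟨0, by rintro r ⟨y, hy, rfl⟩; positivity⟩
      · exact ⟨_, h1, rfl⟩
    rw [map_smul, norm_smul, norm_inv, norm_norm] at h2
    have := mul_le_mul_of_nonneg_right h2 hnw.le
    calc sigmaMin A * ‖w‖ ≤ ‖w‖⁻¹ * ‖ContinuousLinearMap.adjoint A w‖ * ‖w‖ := this
    _ = ‖ContinuousLinearMap.adjoint A w‖ := by field_simp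

/-- The self-adjoint map `Dh(y) ∘ Dh(y)*`. -/
def Smap (h : E → EuclideanSpace ℝ (Fin m)) (y : E) :
    EuclideanSpace ℝ (Fin m) →L[ℝ] EuclideanSpace ℝ (Fin m) :=
  (fderiv ℝ h y).comp (ContinuousLinearMap.adjoint (fderiv ℝ h y))

lemma inner_Smap (h : E → EuclideanSpace ℝ (Fin m)) (y : E) (w : EuclideanSpace ℝ (Fin m)) :
    ⟪Smap h y w, w⟫ = ‖ContinuousLinearMap.adjoint (fderiv ℝ h y) w‖ ^ 2 := by
  rw [← real_inner_self_eq_norm_sq]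
  rw [ContinuousLinearMap.adjoint_inner_right]
  rfl

lemma contDiff_adjoint :
    ContDiff ℝ ∞ (fun A : E →L[ℝ] EuclideanSpace ℝ (Fin m) => ContinuousLinearMap.adjoint A) := by
  apply IsBoundedLinearMap.contDiff
  refine ⟨⟨fun A B => map_add _ A B, fun c A => ?_⟩, 1, one_pos, fun A => ?_⟩
  · rw [LinearIsometryEquiv.map_smulₛₗ]
    simp
  · rw [one_mul, LinearIsometryEquiv.norm_map]

lemma contDiff_Smap {h : E → EuclideanSpace ℝ (Fin m)} (hh : ContDiff ℝ ∞ h) :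
    ContDiff ℝ ∞ (Smap h) := by
  have hfd : ContDiff ℝ ∞ (fun y => fderiv ℝ h y) := hh.fderiv_right (by exact_mod_cast le_top)
  exact hfd.clm_comp (contDiff_adjoint.comp hfd)

lemma Smap_isUnit {h : E → EuclideanSpace ℝ (Fin m)} {y : E} {σl : ℝ} (hσ : 0 < σl)
    (hle : σl ≤ sigmaMin (fderiv ℝ h y)) : IsUnit (Smap h y) := by
  have hinj : Function.Injective (Smap h y) := by
    intro a b hab
    have hsub : Smap h y (a - b) = 0 := by rw [map_sub, hab, sub_self]
    have h1 : ‖ContinuousLinearMap.adjoint (fderiv ℝ h y) (a-b)‖ ^ 2 = 0 := by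
      rw [← inner_Smap, hsub, inner_zero_left]
    have h2 := sigmaMin_mul_norm_le (fderiv ℝ h y) (a - b)
    have h3 : σl * ‖a - b‖ ≤ 0 := by
      have := pow_eq_zero_iff (n := 2) (by norm_num) |>.1 h1
      calc σl * ‖a-b‖ ≤ sigmaMin (fderiv ℝ h y) * ‖a-b‖ :=
            mul_le_mul_of_nonneg_right hle (norm_nonneg _)
      _ ≤ ‖ContinuousLinearMap.adjoint (fderiv ℝ h y) (a-b)‖ := h2
      _ = 0 := this
    have h4 : ‖a - b‖ = 0 := by nlinarith [norm_nonneg (a - b)]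
    exact sub_eq_zero.1 (norm_eq_zero.1 h4)
  have hsurj : Function.Surjective (Smap h y) :=
    LinearMap.injective_iff_surjective.1 hinj
  let e := ContinuousLinearEquiv.ofBijective (Smap h y)
    (LinearMap.ker_eq_bot.2 hinj) (LinearMap.range_eq_top.2 hsurj)
  exact ⟨e.toUnit, rfl⟩

lemma Smap_lam_eq {f : E → ℝ} {h : E → EuclideanSpace ℝ (Fin m)} {y : E}
    (hu : IsUnit (Smap h y)) :
    Smap h y (lam f h y) = fderiv ℝ h y (gradient f y) ∧
      lam f h y = Ring.inverse (Smap h y) (fderiv ℝ h y (gradient f y)) := by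
  obtain ⟨u, hu⟩ := hu
  let e := ContinuousLinearEquiv.unitsEquiv ℝ (EuclideanSpace ℝ (Fin m)) u
  have he : ⇑(Smap h y) = ⇑e := by
    funext z
    rw [ContinuousLinearEquiv.unitsEquiv_apply, hu]
  have hbij : Function.Bijective (Smap h y) := he ▸ e.bijective
  have hfun : (fun z => fderiv ℝ h y (ContinuousLinearMap.adjoint (fderiv ℝ h y) z))
      = ⇑(Smap h y) := rfl
  have h1 : Smap h y (lam f h y) = fderiv ℝ h y (gradient f y) := by
    rw [lam, hfun]
    exact Function.invFun_eq (hbij.2 _)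
  refine ⟨h1, ?_⟩
  have hinv : Ring.inverse (Smap h y) = (↑u⁻¹ : EuclideanSpace ℝ (Fin m) →L[ℝ] EuclideanSpace ℝ (Fin m)) := by
    rw [← hu, Ring.inverse_unit]
  have h2 : Smap h y (Ring.inverse (Smap h y) (fderiv ℝ h y (gradient f y)))
      = fderiv ℝ h y (gradient f y) := by
    rw [hinv, ← hu, ← ContinuousLinearMap.mul_apply, u.mul_inv, ContinuousLinearMap.one_apply]
  exact hbij.1 (h1.trans h2.symm)

lemma isOpen_unitSet (h : E → EuclideanSpace ℝ (Fin m)) (hh : ContDiff ℝ ∞ h) :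
    IsOpen {y : E | IsUnit (Smap h y)} := by
  have : {y : E | IsUnit (Smap h y)} = Smap h ⁻¹' {A | IsUnit A} := rfl
  rw [this]
  exact Units.isOpen.preimage (contDiff_Smap hh).continuous

lemma contDiffAt_lam {f : E → ℝ} {h : E → EuclideanSpace ℝ (Fin m)}
    (hf : ContDiff ℝ ∞ f) (hh : ContDiff ℝ ∞ h) {y : E} (hu : IsUnit (Smap h y)) :
    ContDiffAt ℝ ∞ (lam f h) y := by
  have hev : ∀ᶠ z in nhds y, IsUnit (Smap h z) :=
    (isOpen_unitSet h hh).mem_nhds hu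
  have heq : lam f h =ᶠ[nhds y]
      (fun z => Ring.inverse (Smap h z) (fderiv ℝ h z (gradient f z))) := by
    filter_upwards [hev] with z hz
    exact (Smap_lam_eq hz).2
  have hb : ContDiff ℝ ∞ (fun z => fderiv ℝ h z (gradient f z)) := by
    have h1 : ContDiff ℝ ∞ (fun z => fderiv ℝ h z) := hh.fderiv_right (by exact_mod_cast le_top)
    have h2 : ContDiff ℝ ∞ (fun z => gradient f z) := by
      have h3 : ContDiff ℝ ∞ (fun z => fderiv ℝ f z) := hf.fderiv_right (by exact_mod_cast le_top)
      exact ((InnerProductSpace.toDual ℝ E).symm.contDiff).comp h3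
    exact h1.clm_apply h2
  have hinv : ContDiffAt ℝ ∞ (fun z => Ring.inverse (Smap h z)) y := by
    obtain ⟨u, hu'⟩ := hu
    have := contDiffAt_ringInverse ℝ (n := ∞) u
    rw [hu'] at this
    exact this.comp y (contDiff_Smap hh).contDiffAt
  exact (hinv.clm_apply hb.contDiffAt).congr_of_eventuallyEq heq

lemma contDiffAt_flal {f : E → ℝ} {h : E → EuclideanSpace ℝ (Fin m)}
    (hf : ContDiff ℝ ∞ f) (hh : ContDiff ℝ ∞ h) (β : ℝ) {y : E} (hu : IsUnit (Smap h y)) :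
    ContDiffAt ℝ ∞ (flal f h β) y := by
  have h1 : ContDiffAt ℝ ∞ (fun z => ⟪lam f h z, h z⟫) y :=
    (contDiffAt_lam hf hh hu).inner ℝ hh.contDiffAt
  have h2 : ContDiffAt ℝ ∞ (fun z => β * ‖h z‖ ^ 2) y :=
    (hh.contDiffAt.norm_sq ℝ).const_smul β
  exact (hf.contDiffAt.sub h1).add h2

lemma differentiableAt_iteratedFDeriv_of_isOpen {g : E → ℝ} {U : Set E} (hU : IsOpen U)
    (hg : ∀ y ∈ U, ContDiffAt ℝ ∞ g y) (n : ℕ) {y : E} (hy : y ∈ U) :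
    DifferentiableAt ℝ (iteratedFDeriv ℝ n g) y := by
  have hcd : ContDiffOn ℝ ∞ g U := fun z hz => (hg z hz).contDiffWithinAt
  have h1 : DifferentiableWithinAt ℝ (iteratedFDerivWithin ℝ n g U) U y :=
    hcd.differentiableOn_iteratedFDerivWithin
      (by exact_mod_cast lt_top_iff_ne_top.2 (by simp)) hU.uniqueDiffOn y hy
  have h2 := h1.differentiableAt (hU.mem_nhds hy)
  apply h2.congr_of_eventuallyEq
  filter_upwards [hU.mem_nhds hy] with z hz
  exact (iteratedFDerivWithin_of_isOpen n hU hz).symm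

lemma continuousOn_iteratedFDeriv_of_isOpen {g : E → ℝ} {U : Set E} (hU : IsOpen U)
    (hg : ∀ y ∈ U, ContDiffAt ℝ ∞ g y) (n : ℕ) :
    ContinuousOn (iteratedFDeriv ℝ n g) U := by
  have hcd : ContDiffOn ℝ ∞ g U := fun z hz => (hg z hz).contDiffWithinAt
  exact (hcd.continuousOn_iteratedFDerivWithin (by exact_mod_cast le_top) hU.uniqueDiffOn).congr
    fun z hz => (iteratedFDerivWithin_of_isOpen n hU hz).symm


set_option maxHeartbeats 4000000

/-- Eigenstep decrease (Lemma 3.5): under (A1), (A2), (A3), if `x ∈ C`,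
`β > max{β₁(x), β₂(x), β₃(x)}`, `‖∇g(x)‖ ≤ ε₁ ≤ R/2`, and `d` is a unit-norm direction
with `⟨d, ∇g(x)⟩ ≤ 0` and `⟨d, ∇²g(x)[d]⟩ < −ε₂ < 0`, then every step-size
`α ∈ (0, min(3(1−2c₂)|⟨d,∇²g(x)[d]⟩|/M_g, t₂(x))]` keeps the iterate in `C` and gives
the decrease `g(x) − g(x + αd) ≥ −c₂ α² ⟨d, ∇²g(x)[d]⟩`. -/
theorem eigenstep_decrease
    (f : E → ℝ) (h : E → EuclideanSpace ℝ (Fin m))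
    (hf : ContDiff ℝ ∞ f) (hh : ContDiff ℝ ∞ h)
    (R σl Ch : ℝ) (hR : 0 < R) (hσ : 0 < σl) (hCh : 0 < Ch)
    (hA1 : ∀ y : E, ‖h y‖ ≤ R → sigmaMin (fderiv ℝ h y) ≥ σl)
    (hA2M : IsCompact {y : E | h y = 0}) (hA2C : IsCompact {y : E | ‖h y‖ ≤ R})
    (hA3 : ∀ y : E, ‖h y‖ ≤ R → ∀ v : E,
      ‖h (y + v) - h y - fderiv ℝ h y v‖ ≤ Ch * ‖v‖ ^ 2)
    (x : E) (hx : ‖h x‖ ≤ R)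
    (β : ℝ) (hβ : β > max (beta1 f h x) (max (beta2 f h x) (beta3 h x)))
    (ε₁ : ℝ) (hε₁ : 0 ≤ ε₁) (hε₁R : ε₁ ≤ R / 2)
    (hgrad : ‖gradient (flal f h β) x‖ ≤ ε₁)
    (ε₂ : ℝ) (hε₂ : 0 < ε₂)
    (d : E) (hd : ‖d‖ = 1)
    (hdescent : ⟪d, gradient (flal f h β) x⟫ ≤ 0)
    (hcurv : iteratedFDeriv ℝ 2 (flal f h β) x ![d, d] < -ε₂)
    (c₂ : ℝ) (hc₂ : 0 < c₂ ∧ c₂ < 1 / 2) :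
    ∀ α : ℝ, 0 < α →
      α ≤ min (3 * (1 - 2 * c₂) * |iteratedFDeriv ℝ 2 (flal f h β) x ![d, d]| / Mg f h β R)
            (t2 h R Ch x) →
      ‖h (x + α • d)‖ ≤ R ∧
      flal f h β x - flal f h β (x + α • d)
        ≥ -c₂ * α ^ 2 * iteratedFDeriv ℝ 2 (flal f h β) x ![d, d] := by
  intro α hα hαle
  have htop1 : (∞ : WithTop ℕ∞) ≠ 0 := by simp
  set g := flal f h β with hgdef
  set M := Mg f h β R with hMdef
  set q := iteratedFDeriv ℝ 2 g x ![d, d] with hqdef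
  have hαle1 : α ≤ 3 * (1 - 2 * c₂) * |q| / M := le_trans hαle (min_le_left _ _)
  have hαle2 : α ≤ t2 h R Ch x := le_trans hαle (min_le_right _ _)
  clear hαle
  clear_value M q
  set A := fderiv ℝ h x with hAdef
  have hmx : IsUnit (Smap h x) := Smap_isUnit hσ (hA1 x hx)
  have hσm : σl ≤ sigmaMin A := hA1 x hx
  have hσm0 : 0 < sigmaMin A := lt_of_lt_of_le hσ hσm
  -- β bounds
  have hb2 : Clam f h x < β * sigmaMin A := by
    have h1 : beta2 f h x < β := lt_of_le_of_lt (le_trans (le_max_left _ _) (le_max_right _ _)) hβ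
    rw [beta2, div_lt_iff₀ hσm0] at h1
    nlinarith
  have hb3 : 1 < β * sigmaMin A := by
    have h1 : beta3 h x < β := lt_of_le_of_lt (le_trans (le_max_right _ _) (le_max_right _ _)) hβ
    rw [beta3, div_lt_iff₀ hσm0] at h1
    nlinarith
  have hβpos : 0 < β := by nlinarith
  -- derivative of g at x
  have hlamd : DifferentiableAt ℝ (lam f h) x :=
    (contDiffAt_lam hf hh hmx).differentiableAt htop1
  set Dl := fderiv ℝ (lam f h) x with hDldef
  have hClam : Clam f h x = ‖Dl‖ := rfl
  have hlam' : HasFDerivAt (lam f h) Dl x := hlamd.hasFDerivAt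
  have hh' : HasFDerivAt h A x := (hh.differentiable htop1 x).hasFDerivAt
  have hf' : HasFDerivAt f (fderiv ℝ f x) x := (hf.differentiable htop1 x).hasFDerivAt
  have hinner : HasFDerivAt (fun y => ⟪lam f h y, h y⟫)
      ((fderivInnerCLM ℝ (lam f h x, h x)).comp (Dl.prod A)) x := hlam'.inner ℝ hh'
  have hnormsq : HasFDerivAt (fun y => ⟪h y, h y⟫)
      ((fderivInnerCLM ℝ (h x, h x)).comp (A.prod A)) x := hh'.inner ℝ hh'
  have hgeq : g = fun y => f y - ⟪lam f h y, h y⟫ + β * ⟪h y, h y⟫ := by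
    funext y
    rw [hgdef, flal, real_inner_self_eq_norm_sq]
  have hg' : HasFDerivAt g
      ((fderiv ℝ f x - (fderivInnerCLM ℝ (lam f h x, h x)).comp (Dl.prod A))
        + β • ((fderivInnerCLM ℝ (h x, h x)).comp (A.prod A))) x := by
    rw [hgeq]
    exact (hf'.sub hinner).add (hnormsq.const_mul β)
  have hgradg : ∀ v : E, ⟪gradient g x, v⟫ = fderiv ℝ g x v := by
    intro v
    have : gradient g x = (InnerProductSpace.toDual ℝ E).symm (fderiv ℝ g x) := rfl
    rw [this, InnerProductSpace.toDual_symm_apply]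
  have hdir : fderiv ℝ g x d ≤ 0 := by
    rw [← hgradg d, real_inner_comm]
    exact hdescent
  set u := ContinuousLinearMap.adjoint A (h x) with hu
  have hDgu : fderiv ℝ g x u = fderiv ℝ f x u - (⟪lam f h x, A u⟫ + ⟪Dl u, h x⟫)
      + β * (⟪h x, A u⟫ + ⟪A u, h x⟫) := by
    rw [hg'.fderiv]
    simp [ContinuousLinearMap.sub_apply, ContinuousLinearMap.add_apply,
      ContinuousLinearMap.smul_apply, ContinuousLinearMap.comp_apply,
      ContinuousLinearMap.prod_apply, fderivInnerCLM_apply, smul_eq_mul]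
  have hfdfx : fderiv ℝ f x u = ⟪gradient f x, u⟫ := by
    have : gradient f x = (InnerProductSpace.toDual ℝ E).symm (fderiv ℝ f x) := rfl
    rw [this, InnerProductSpace.toDual_symm_apply]
  have hSlam : Smap h x (lam f h x) = A (gradient f x) := (Smap_lam_eq (f := f) hmx).1
  have horth : fderiv ℝ f x u - ⟪lam f h x, A u⟫ = 0 := by
    have e1 : fderiv ℝ f x u = ⟪A (gradient f x), h x⟫ := by
      rw [hfdfx, hu, ContinuousLinearMap.adjoint_inner_right]
    have e2 : ⟪lam f h x, A u⟫ = ⟪A (gradient f x), h x⟫ := by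
      calc ⟪lam f h x, A u⟫ = ⟪ContinuousLinearMap.adjoint A (lam f h x), u⟫ :=
            (ContinuousLinearMap.adjoint_inner_left A u (lam f h x)).symm
      _ = ⟪A (ContinuousLinearMap.adjoint A (lam f h x)), h x⟫ := by
            rw [hu, ContinuousLinearMap.adjoint_inner_right]
      _ = ⟪Smap h x (lam f h x), h x⟫ := rfl
      _ = ⟪A (gradient f x), h x⟫ := by rw [hSlam]
    rw [e1, e2, sub_self]
  have hAu : ⟪h x, A u⟫ = ‖u‖ ^ 2 := by
    rw [← ContinuousLinearMap.adjoint_inner_left A u (h x), ← hu, real_inner_self_eq_norm_sq]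
  have hkey : ⟪gradient g x, u⟫ = -⟪Dl u, h x⟫ + 2 * β * ‖u‖ ^ 2 := by
    rw [hgradg u, hDgu]
    linear_combination horth + β * hAu + β * ((real_inner_comm (h x) (A u)).trans hAu)
  have hCS : ⟪gradient g x, u⟫ ≤ ε₁ * ‖u‖ :=
    le_trans (real_inner_le_norm _ _) (mul_le_mul_of_nonneg_right hgrad (norm_nonneg u))
  have hDlu : ⟪Dl u, h x⟫ ≤ Clam f h x * ‖u‖ * ‖h x‖ := by
    calc ⟪Dl u, h x⟫ ≤ ‖Dl u‖ * ‖h x‖ := real_inner_le_norm _ _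
    _ ≤ (‖Dl‖ * ‖u‖) * ‖h x‖ :=
        mul_le_mul_of_nonneg_right (Dl.le_opNorm u) (norm_nonneg _)
    _ = Clam f h x * ‖u‖ * ‖h x‖ := by rw [hClam]
  have hu_low : sigmaMin A * ‖h x‖ ≤ ‖u‖ := by
    rw [hu]; exact sigmaMin_mul_norm_le A (h x)
  have hClam0 : 0 ≤ Clam f h x := norm_nonneg _
  clear_value Dl u
  have hhx2 : ‖h x‖ ≤ R / 2 := by
    rcases eq_or_ne (h x) 0 with h0 | h0
    · rw [h0, norm_zero]; linarith
    · have hpos : 0 < ‖h x‖ := norm_pos_iff.2 h0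
      have hupos : 0 < ‖u‖ := lt_of_lt_of_le (by positivity) hu_low
      have key2 : (2 * β * ‖u‖) * ‖u‖ ≤ (ε₁ + Clam f h x * ‖h x‖) * ‖u‖ := by nlinarith [hkey, hCS, hDlu]
      have key3 : 2 * β * ‖u‖ ≤ ε₁ + Clam f h x * ‖h x‖ :=
        le_of_mul_le_mul_right key2 hupos
      have key4 : 2 * (β * sigmaMin A) * ‖h x‖ ≤ ε₁ + Clam f h x * ‖h x‖ := by nlinarith [key3, hu_low, hβpos]
      have hcoef : (0:ℝ) ≤ 2 * (β * sigmaMin A) - Clam f h x - 1 := by linarith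
      nlinarith [mul_nonneg hpos.le hcoef, key4, hε₁R]
  clear hβ hgrad hdescent hgradg hDgu hkey hCS hDlu hu_low hClam hClam0 horth hAu hfdfx
  clear hSlam hg' hgeq hnormsq hinner hf' hh' hlam' hlamd hmx hσm hσm0 hb2 hb3
  clear hu u hDldef Dl
  -- membership along the segment
  set a := ‖A‖ with hadef
  have ha0 : 0 ≤ a := norm_nonneg _
  set s := Real.sqrt (a ^ 2 + 2 * Ch * R) with hsdef
  have hs2 : s ^ 2 = a ^ 2 + 2 * Ch * R := Real.sq_sqrt (by positivity)
  have hs0 : 0 ≤ s := Real.sqrt_nonneg _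
  have ht2eq : t2 h R Ch x = (-a + s) / (2 * Ch) := rfl
  clear_value A a s
  rw [ht2eq] at hαle2
  have hstep : ∀ t : ℝ, 0 ≤ t → t ≤ α → ‖h (x + t • d)‖ ≤ R := by
    intro t ht0 htα
    have h3 := hA3 x hx (t • d)
    rw [← hAdef] at h3
    have hnsd : ‖t • d‖ = t := by
      rw [norm_smul, hd, Real.norm_eq_abs, abs_of_nonneg ht0, mul_one]
    have hAv : ‖A (t • d)‖ ≤ a * t := by
      calc ‖A (t • d)‖ ≤ ‖A‖ * ‖t • d‖ := A.le_opNorm _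
      _ = a * t := by rw [hnsd, ← hadef]
    have hdecomp : h (x + t • d) = (h (x + t • d) - h x - A (t • d)) + h x + A (t • d) := by
      abel
    have hnorm : ‖h (x + t • d)‖ ≤ ‖h x‖ + a * t + Ch * t ^ 2 := by
      rw [hdecomp]
      refine le_trans (norm_add₃_le) ?_
      rw [hnsd] at h3
      linarith only [h3, hAv]
    have htt2 : t ≤ (-a + s) / (2 * Ch) := le_trans htα hαle2
    have htt2' : t * (2 * Ch) ≤ -a + s := (le_div_iff₀ (by positivity)).1 htt2
    have h2Ct : 0 ≤ 2 * Ch * t := mul_nonneg (mul_nonneg (by norm_num) hCh.le) ht0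
    have hfac1 : (0:ℝ) ≤ s - (2 * Ch * t + a) := by linarith only [htt2']
    have hfac2 : (0:ℝ) ≤ s + (2 * Ch * t + a) := by linarith only [hs0, h2Ct, ha0]
    have hmono : a * t + Ch * t ^ 2 ≤ R / 2 := by
      nlinarith only [mul_nonneg hfac1 hfac2, hs2, hCh]
    linarith only [hnorm, hmono, hhx2]
  refine ⟨hstep α hα.le le_rfl, ?_⟩
  -- smoothness setup
  set U := {y : E | IsUnit (Smap h y)} with hUdef
  have hUopen : IsOpen U := isOpen_unitSet h hh
  have hgat : ∀ y ∈ U, ContDiffAt ℝ ∞ g y := fun y hy => contDiffAt_flal hf hh β hy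
  have hCsub : ∀ y : E, ‖h y‖ ≤ R → y ∈ U := fun y hy => Smap_isUnit hσ (hA1 y hy)
  set L := fun t : ℝ => x + t • d with hLdef
  have hmemU : ∀ t ∈ Set.Icc (0:ℝ) α, L t ∈ U := fun t ht => hCsub _ (hstep t ht.1 ht.2)
  have hL' : ∀ t : ℝ, HasDerivAt L d t := by
    intro t
    have h1 : HasDerivAt (fun t : ℝ => t • d) ((1:ℝ) • d) t := (hasDerivAt_id t).smul_const d
    have h2 := h1.const_add x
    simpa only [one_smul] using h2
  set φ := fun t : ℝ => g (L t) with hφdef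
  set φ₁ := fun t : ℝ => fderiv ℝ g (L t) d with hφ₁def
  set φ₂ := fun t : ℝ => iteratedFDeriv ℝ 2 g (L t) ![d, d] with hφ₂def
  set φ₃ := fun t : ℝ => iteratedFDeriv ℝ 3 g (L t) ![d, d, d] with hφ₃def
  have hD1 : ∀ t ∈ Set.Icc (0:ℝ) α, HasDerivAt φ (φ₁ t) t := by
    intro t ht
    exact (((hgat _ (hmemU t ht)).differentiableAt htop1).hasFDerivAt).comp_hasDerivAt t (hL' t)
  have htwoapply : ∀ y : E, iteratedFDeriv ℝ 2 g y ![d, d] = fderiv ℝ (fderiv ℝ g) y d d := by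
    intro y
    rw [iteratedFDeriv_two_apply]
    simp
  have hD2 : ∀ t ∈ Set.Icc (0:ℝ) α, HasDerivAt φ₁ (φ₂ t) t := by
    intro t ht
    have hd2 : DifferentiableAt ℝ (fderiv ℝ g) (L t) :=
      ((hgat _ (hmemU t ht)).fderiv_right (by exact_mod_cast le_top)).differentiableAt htop1
    have h1 : HasDerivAt (fun s => fderiv ℝ g (L s)) (fderiv ℝ (fderiv ℝ g) (L t) d) t :=
      (hd2.hasFDerivAt).comp_hasDerivAt t (hL' t)
    have h2 := ((ContinuousLinearMap.apply ℝ ℝ d).hasFDerivAt).comp_hasDerivAt t h1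
    have h3 : φ₂ t = fderiv ℝ (fderiv ℝ g) (L t) d d := htwoapply (L t)
    rw [hφ₁def]
    rw [h3]
    exact h2
  have hD3 : ∀ t ∈ Set.Icc (0:ℝ) α, HasDerivAt φ₂ (φ₃ t) t := by
    intro t ht
    have hd3 : DifferentiableAt ℝ (iteratedFDeriv ℝ 2 g) (L t) :=
      differentiableAt_iteratedFDeriv_of_isOpen hUopen hgat 2 (hmemU t ht)
    have h1 : HasDerivAt (fun s => iteratedFDeriv ℝ 2 g (L s))
        (fderiv ℝ (iteratedFDeriv ℝ 2 g) (L t) d) t :=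
      (hd3.hasFDerivAt).comp_hasDerivAt t (hL' t)
    have h2 := ((ContinuousMultilinearMap.apply ℝ (fun _ : Fin 2 => E) ℝ
      ![d, d]).hasFDerivAt).comp_hasDerivAt t h1
    have h3 : iteratedFDeriv ℝ 3 g (L t) ![d, d, d]
        = (fderiv ℝ (iteratedFDeriv ℝ 2 g) (L t) d) ![d, d] := by
      have := iteratedFDeriv_succ_apply_left (𝕜 := ℝ) (f := g) (x := L t) (n := 2) ![d, d, d]
      simpa using this
    rw [hφ₂def, hφ₃def]
    show HasDerivAt (fun s => iteratedFDeriv ℝ 2 g (L s) ![d, d])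
      (iteratedFDeriv ℝ 3 g (L t) ![d, d, d]) t
    rw [h3]
    exact h2
  -- Mg bounds
  have hMgdef : M
      = sSup ((fun y => ‖iteratedFDeriv ℝ 3 g y‖) '' {y : E | ‖h y‖ ≤ R}) := hMdef
  clear_value g
  have hcontM : ContinuousOn (fun y => ‖iteratedFDeriv ℝ 3 g y‖) {y : E | ‖h y‖ ≤ R} :=
    ((continuousOn_iteratedFDeriv_of_isOpen hUopen hgat 3).mono
      (fun y hy => hCsub y hy)).norm
  have hbdd : BddAbove ((fun y => ‖iteratedFDeriv ℝ 3 g y‖) '' {y : E | ‖h y‖ ≤ R}) :=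
    (hA2C.image_of_continuousOn hcontM).bddAbove
  have hMg_ge : ∀ y : E, ‖h y‖ ≤ R → ‖iteratedFDeriv ℝ 3 g y‖ ≤ M := by
    intro y hy
    rw [hMgdef]
    exact le_csSup hbdd ⟨y, hy, rfl⟩
  have hMg0 : 0 ≤ M := le_trans (norm_nonneg _) (hMg_ge x hx)
  have hqneg : q < 0 := lt_trans hcurv (by linarith)
  rcases eq_or_lt_of_le hMg0 with hMgz | hMgpos
  · exfalso
    rw [← hMgz, div_zero] at hαle1
    linarith
  have hαMg : α * M ≤ 3 * (1 - 2 * c₂) * (-q) := by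
    rw [abs_of_neg hqneg] at hαle1
    exact (le_div_iff₀ hMgpos).1 hαle1
  have hL0 : L 0 = x := by rw [hLdef]; simp
  have hφ₂0 : φ₂ 0 = q := by
    rw [hφ₂def, hqdef]
    show iteratedFDeriv ℝ 2 g (L 0) ![d, d] = iteratedFDeriv ℝ 2 g x ![d, d]
    rw [hL0]
  have hφ₃bd : ∀ t ∈ Set.Icc (0:ℝ) α, |φ₃ t| ≤ M := by
    intro t ht
    have h1 : ‖iteratedFDeriv ℝ 3 g (L t) ![d, d, d]‖
        ≤ ‖iteratedFDeriv ℝ 3 g (L t)‖ * ∏ i, ‖(![d, d, d]) i‖ :=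
      ContinuousMultilinearMap.le_opNorm _ _
    have h2 : ∏ i : Fin 3, ‖(![d, d, d]) i‖ = 1 := by
      simp [Fin.prod_univ_succ, hd]
    rw [h2, mul_one] at h1
    exact le_trans h1 (hMg_ge _ (hstep t ht.1 ht.2))
  have hφ₂bd : ∀ t ∈ Set.Icc (0:ℝ) α, φ₂ t ≤ q + M * t := by
    have key := norm_image_sub_le_of_norm_deriv_le_segment'
      (f := φ₂) (f' := φ₃) (C := M) (a := 0) (b := α)
      (fun t ht => (hD3 t ht).hasDerivWithinAt)
      (fun t ht => hφ₃bd t (Set.Ico_subset_Icc_self ht))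
    intro t ht
    have := key t ht
    rw [hφ₂0] at this
    have h1 := (abs_le.1 (by simpa using this)).2
    linarith only [h1]
  -- first monotonicity step
  have hφ₁bd : ∀ t ∈ Set.Icc (0:ℝ) α, φ₁ t ≤ φ₁ 0 + q * t + M / 2 * t ^ 2 := by
    set w := fun t : ℝ => q * t + M / 2 * t ^ 2 + φ₁ 0 - φ₁ t with hwdef
    have hw' : ∀ t ∈ Set.Icc (0:ℝ) α, HasDerivAt w (q + M * t - φ₂ t) t := by
      intro t ht
      have h1 : HasDerivAt (fun t : ℝ => q * t) (q * 1) t := (hasDerivAt_id t).const_mul q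
      have h2 : HasDerivAt (fun t : ℝ => M / 2 * t ^ 2) (M / 2 * (2 * t ^ 1)) t :=
        (hasDerivAt_pow 2 t).const_mul (M / 2)
      have h4 := ((h1.add h2).add_const (φ₁ 0)).sub (hD2 t ht)
      rw [show q + M * t - φ₂ t = q * 1 + M / 2 * (2 * t ^ 1) - φ₂ t by ring]
      exact h4
    have hmono : MonotoneOn w (Set.Icc (0:ℝ) α) := by
      apply monotoneOn_of_deriv_nonneg (convex_Icc 0 α)
      · intro t ht
        exact (hw' t ht).continuousAt.continuousWithinAt
      · intro t ht
        rw [interior_Icc] at ht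
        exact ((hw' t (Set.Ioo_subset_Icc_self ht)).differentiableAt).differentiableWithinAt
      · intro t ht
        rw [interior_Icc] at ht
        rw [(hw' t (Set.Ioo_subset_Icc_self ht)).deriv]
        have := hφ₂bd t (Set.Ioo_subset_Icc_self ht)
        linarith only [this]
    intro t ht
    have h0 : (0:ℝ) ∈ Set.Icc (0:ℝ) α := Set.left_mem_Icc.2 hα.le
    have := hmono h0 ht ht.1
    have hw0 : w 0 = 0 := by rw [hwdef]; ring
    rw [hw0] at this
    rw [hwdef] at this
    dsimp at this
    linarith only [this]
  -- second monotonicity step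
  have hφbd : φ α ≤ φ 0 + φ₁ 0 * α + q / 2 * α ^ 2 + M / 6 * α ^ 3 := by
    set w := fun t : ℝ => φ₁ 0 * t + q / 2 * t ^ 2 + M / 6 * t ^ 3 + φ 0 - φ t with hwdef
    have hw' : ∀ t ∈ Set.Icc (0:ℝ) α,
        HasDerivAt w (φ₁ 0 + q * t + M / 2 * t ^ 2 - φ₁ t) t := by
      intro t ht
      have h1 : HasDerivAt (fun t : ℝ => φ₁ 0 * t) (φ₁ 0 * 1) t :=
        (hasDerivAt_id t).const_mul (φ₁ 0)
      have h2 : HasDerivAt (fun t : ℝ => q / 2 * t ^ 2) (q / 2 * (2 * t ^ 1)) t :=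
        (hasDerivAt_pow 2 t).const_mul (q / 2)
      have h3 : HasDerivAt (fun t : ℝ => M / 6 * t ^ 3) (M / 6 * (3 * t ^ 2)) t :=
        (hasDerivAt_pow 3 t).const_mul (M / 6)
      have h4 := (((h1.add h2).add h3).add_const (φ 0)).sub (hD1 t ht)
      rw [show φ₁ 0 + q * t + M / 2 * t ^ 2 - φ₁ t
        = φ₁ 0 * 1 + q / 2 * (2 * t ^ 1) + M / 6 * (3 * t ^ 2) - φ₁ t by ring]
      exact h4
    have hmono : MonotoneOn w (Set.Icc (0:ℝ) α) := by
      apply monotoneOn_of_deriv_nonneg (convex_Icc 0 α)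
      · intro t ht
        exact (hw' t ht).continuousAt.continuousWithinAt
      · intro t ht
        rw [interior_Icc] at ht
        exact ((hw' t (Set.Ioo_subset_Icc_self ht)).differentiableAt).differentiableWithinAt
      · intro t ht
        rw [interior_Icc] at ht
        rw [(hw' t (Set.Ioo_subset_Icc_self ht)).deriv]
        have := hφ₁bd t (Set.Ioo_subset_Icc_self ht)
        linarith only [this]
    have h0 : (0:ℝ) ∈ Set.Icc (0:ℝ) α := Set.left_mem_Icc.2 hα.le
    have hαmem : α ∈ Set.Icc (0:ℝ) α := Set.right_mem_Icc.2 hα.le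
    have := hmono h0 hαmem hα.le
    have hw0 : w 0 = 0 := by rw [hwdef]; ring
    rw [hw0] at this
    rw [hwdef] at this
    dsimp at this
    linarith only [this]
  -- conclusion
  have hφ₁0 : φ₁ 0 ≤ 0 := by
    have h1 : φ₁ 0 = fderiv ℝ g x d := by
      show fderiv ℝ g (L 0) d = fderiv ℝ g x d
      rw [hL0]
    rw [h1]
    exact hdir
  have hφ0 : φ 0 = g x := by
    show g (L 0) = g x
    rw [hL0]
  have hφα : φ α = g (x + α • d) := rfl
  have hf10 : φ₁ 0 * α ≤ 0 := mul_nonpos_of_nonpos_of_nonneg hφ₁0 hα.le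
  have hfinal : g x - g (x + α • d) ≥ -c₂ * α ^ 2 * q := by
    rw [← hφ0, ← hφα]
    nlinarith only [hφbd, hf10, mul_le_mul_of_nonneg_left hαMg (sq_nonneg α)]
  exact hfinal
end
end

section
/- Assume (A1): there exist R, σ̲ > 0 such that ‖Dh(x)*[y]‖ ≥ σ̲‖y‖ for all y ∈ ℝ^m and all x ∈ C := {x ∈ E : ‖h(x)‖ ≤ R}. Then every connected component of C contains a point z̄ with h(z̄) = 0. Equivalently, for every x₀ ∈ C there exists z̄ in the same connected component of C as x₀ with h(z̄) = 0. -/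
open scoped ContDiff RealInnerProductSpace

/-- Under (A1), every connected component of `C = {x : ‖h(x)‖ ≤ R}` contains a feasible
point: for every `x₀ ∈ C` there is `z̄` in the connected component of `x₀` in `C` with
`h(z̄) = 0`. -/
theorem connected_component_of_region_contains_feasible_point
    {E : Type*} [NormedAddCommGroup E] [InnerProductSpace ℝ E] [FiniteDimensional ℝ E]
    {m : ℕ} (h : E → EuclideanSpace ℝ (Fin m)) (hh : ContDiff ℝ ∞ h)
    (R σl : ℝ) (hR : 0 < R) (hσ : 0 < σl)
    (hA1 : ∀ x : E, ‖h x‖ ≤ R → ∀ y : EuclideanSpace ℝ (Fin m),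
      ‖ContinuousLinearMap.adjoint (fderiv ℝ h x) y‖ ≥ σl * ‖y‖) :
    ∀ x₀ ∈ {x : E | ‖h x‖ ≤ R},
      ∃ z ∈ connectedComponentIn {x : E | ‖h x‖ ≤ R} x₀, h z = 0 := by
  intro x₀ hx₀
  set C : Set E := {x : E | ‖h x‖ ≤ R} with hCdef
  set K : Set E := connectedComponentIn C x₀ with hKdef
  have hcont : Continuous h := hh.continuous
  have hCclosed : IsClosed C := isClosed_le hcont.norm continuous_const
  -- K is closed
  have hKclosed : IsClosed K := by
    rw [hKdef, connectedComponentIn_eq_image hx₀]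
    exact (hCclosed.isClosedEmbedding_subtypeVal.isClosedMap _ isClosed_connectedComponent)
  have hx₀K : x₀ ∈ K := mem_connectedComponentIn hx₀
  set ε : ℝ := σl / 4 with hεdef
  have hε : 0 < ε := by positivity
  set g : E → ℝ := fun x => ‖h x‖ + ε * ‖x - x₀‖ with hgdef
  have hgcont : Continuous g := by
    exact (hcont.norm).add (continuous_const.mul ((continuous_id.sub continuous_const).norm))
  set r : ℝ := (R + 1) / ε with hrdef
  have hr : 0 < r := by positivity
  -- minimize g on K ∩ closed ball
  have hcompact : IsCompact (K ∩ Metric.closedBall x₀ r) :=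
    (isCompact_closedBall x₀ r).inter_left hKclosed
  have hne : (K ∩ Metric.closedBall x₀ r).Nonempty :=
    ⟨x₀, hx₀K, Metric.mem_closedBall_self hr.le⟩
  obtain ⟨z, hzmem, hzmin⟩ := hcompact.exists_isMinOn hne hgcont.continuousOn
  have hzK : z ∈ K := hzmem.1
  have hzC : z ∈ C := connectedComponentIn_subset C x₀ hzK
  have hzR : ‖h z‖ ≤ R := hzC
  have hgz_le : g z ≤ g x₀ := hzmin ⟨hx₀K, Metric.mem_closedBall_self hr.le⟩
  have hgx₀ : g x₀ = ‖h x₀‖ := by simp [hgdef]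
  -- global minimality on K
  have hglobal : ∀ w ∈ K, g z ≤ g w := by
    intro w hw
    by_cases hwb : w ∈ Metric.closedBall x₀ r
    · exact hzmin ⟨hw, hwb⟩
    · have h1 : r < ‖w - x₀‖ := by
        simpa [Metric.mem_closedBall, dist_eq_norm] using hwb
      have h2 : R + 1 ≤ ε * ‖w - x₀‖ := by
        have : ε * r ≤ ε * ‖w - x₀‖ := mul_le_mul_of_nonneg_left h1.le hε.le
        rw [hrdef] at this
        calc R + 1 = ε * ((R + 1) / ε) := by field_simp
        _ ≤ ε * ‖w - x₀‖ := this
      have : g z ≤ R := by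
        calc g z ≤ g x₀ := hgz_le
        _ = ‖h x₀‖ := hgx₀
        _ ≤ R := hx₀
      have : g z ≤ R + 1 := by linarith
      calc g z ≤ R + 1 := this
      _ ≤ ε * ‖w - x₀‖ := h2
      _ ≤ g w := by
          have := norm_nonneg (h w); simp only [hgdef]; linarith
  refine ⟨z, hzK, ?_⟩
  by_contra hhz
  have hhz' : 0 < ‖h z‖ := norm_pos_iff.mpr hhz
  -- derivative data
  set A : E →L[ℝ] EuclideanSpace ℝ (Fin m) := fderiv ℝ h z with hAdef
  set v : E := ContinuousLinearMap.adjoint A (h z) with hvdef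
  have hvlb : σl * ‖h z‖ ≤ ‖v‖ := hA1 z hzR (h z)
  have hvpos : 0 < ‖v‖ := lt_of_lt_of_le (by positivity) hvlb
  have hvne : v ≠ 0 := norm_pos_iff.mp hvpos
  set u : E := (-‖v‖⁻¹) • v with hudef
  have hu_norm : ‖u‖ = 1 := by
    rw [hudef, norm_smul]
    simp [abs_of_pos (inv_pos.mpr hvpos), inv_mul_cancel₀ hvpos.ne']
  set c : ℝ → E := fun t => z + t • u with hcdef
  have hc0 : c 0 = z := by simp [hcdef]
  have hccont : Continuous c := by
    exact continuous_const.add (continuous_id.smul continuous_const)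
  have hcderiv : HasDerivAt c u 0 := by
    have := ((hasDerivAt_id (0:ℝ)).smul_const u).const_add z; rw [one_smul] at this; exact this
  have hdiff : DifferentiableAt ℝ h z := (hh.differentiable (by simp)).differentiableAt
  have hfd : HasFDerivAt h A (c 0) := by rw [hc0]; exact hdiff.hasFDerivAt
  have hhc : HasDerivAt (fun t => h (c t)) (A u) 0 := hfd.comp_hasDerivAt 0 hcderiv
  -- inner product computations
  have hAv : ⟪h z, A v⟫ = ‖v‖ ^ 2 := by
    rw [← ContinuousLinearMap.adjoint_inner_left A v (h z), ← hvdef,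
      real_inner_self_eq_norm_sq]
  have hAu : ⟪h z, A u⟫ = -‖v‖ := by
    rw [hudef, map_smul, inner_smul_right, hAv]
    field_simp [pow_two]
  set q : ℝ → ℝ := fun t => ⟪h (c t), h (c t)⟫ with hqdef
  have hq0 : q 0 = ‖h z‖ ^ 2 := by rw [hqdef]; simp only [hc0]; rw [real_inner_self_eq_norm_sq]
  have hq0ne : q 0 ≠ 0 := by rw [hq0]; positivity
  have hqderiv : HasDerivAt q (⟪h (c 0), A u⟫ + ⟪A u, h (c 0)⟫) 0 :=
    HasDerivAt.inner ℝ hhc hhc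
  have hqderiv' : HasDerivAt q (-(2 * ‖v‖)) 0 := by
    convert hqderiv using 1
    rw [hc0]
    have h2 : ⟪A u, h z⟫ = -‖v‖ := by rw [real_inner_comm]; exact hAu
    rw [hAu, h2]; ring
  set ψ : ℝ → ℝ := fun t => Real.sqrt (q t) with hψdef
  have hψeq : ∀ t, ψ t = ‖h (c t)‖ := by
    intro t
    rw [hψdef]
    simp only [hqdef, real_inner_self_eq_norm_mul_norm]
    exact Real.sqrt_mul_self (norm_nonneg _)
  have hψ0 : ψ 0 = ‖h z‖ := by rw [hψeq 0, hc0]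
  set D : ℝ := -(2 * ‖v‖) / (2 * Real.sqrt (q 0)) with hDdef
  have hψderiv : HasDerivAt ψ D 0 := hqderiv'.sqrt hq0ne
  have hsq : Real.sqrt (q 0) = ‖h z‖ := by
    rw [hq0, Real.sqrt_sq (norm_nonneg _)]
  have hDval : D = -(‖v‖ / ‖h z‖) := by
    rw [hDdef, hsq]; field_simp
  have hDle : D ≤ -σl := by
    rw [hDval, neg_le_neg_iff]
    rw [le_div_iff₀ hhz']
    exact hvlb
  have hDneg : D < 0 := lt_of_le_of_lt hDle (by linarith)
  -- slope argument
  have hslope : Filter.Tendsto (slope ψ 0) (nhdsWithin 0 {(0:ℝ)}ᶜ) (nhds D) :=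
    hasDerivAt_iff_tendsto_slope.mp hψderiv
  have hev : ∀ᶠ t in nhdsWithin 0 {(0:ℝ)}ᶜ, slope ψ 0 t < D / 2 :=
    hslope.eventually_lt_const (by linarith)
  obtain ⟨δ, hδpos, hδ⟩ := Metric.mem_nhdsWithin_iff.mp hev
  have hkey : ∀ s : ℝ, 0 < s → s < δ → ψ s < ψ 0 + s * (D / 2) := by
    intro s hs hsδ
    have hmem : s ∈ ({(0:ℝ)}ᶜ : Set ℝ) := by simp [hs.ne']
    have hdist : s ∈ Metric.ball (0:ℝ) δ := by
      simp only [Metric.mem_ball, Real.dist_eq, sub_zero]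
      rw [abs_of_pos hs]; exact hsδ
    have h3 : slope ψ 0 s < D / 2 := hδ ⟨hdist, hmem⟩
    rw [slope_def_field] at h3
    have h2 : (ψ s - ψ 0) / s < D / 2 := by simpa [div_sub_div_same] using h3
    have := (div_lt_iff₀ hs).mp h2
    linarith
  set t : ℝ := δ / 2 with htdef
  have ht : 0 < t := by positivity
  have htδ : t < δ := by rw [htdef]; linarith
  -- the segment lies in C
  have hseg : (fun s => c s) '' Set.Icc 0 t ⊆ C := by
    rintro _ ⟨s, ⟨hs0, hst⟩, rfl⟩
    rcases eq_or_lt_of_le hs0 with heq | hs0'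
    · show c s ∈ C
      rw [← heq, hc0]
      exact hzC
    · have hks := hkey s hs0' (lt_of_le_of_lt hst htδ)
      have hsd : s * (D / 2) < 0 := mul_neg_of_pos_of_neg hs0' (by linarith)
      have hψs : ψ s < ψ 0 := by linarith
      show ‖h (c s)‖ ≤ R
      rw [← hψeq s]
      calc ψ s ≤ ψ 0 := hψs.le
      _ = ‖h z‖ := hψ0
      _ ≤ R := hzR
  have hsegconn : IsPreconnected ((fun s => c s) '' Set.Icc 0 t) :=
    (isPreconnected_Icc).image c hccont.continuousOn
  have hzseg : z ∈ (fun s => c s) '' Set.Icc 0 t :=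
    ⟨0, Set.left_mem_Icc.mpr ht.le, hc0⟩
  have hKz : connectedComponentIn C x₀ = connectedComponentIn C z :=
    connectedComponentIn_eq hzK
  have hsegK : (fun s => c s) '' Set.Icc 0 t ⊆ K := by
    rw [hKdef, hKz]
    exact hsegconn.subset_connectedComponentIn hzseg hseg
  have hctK : c t ∈ K := hsegK ⟨t, Set.right_mem_Icc.mpr ht.le, rfl⟩
  -- contradiction with minimality
  have hmin := hglobal (c t) hctK
  have hnormct : ‖c t - x₀‖ ≤ ‖z - x₀‖ + t := by
    have hct : c t - x₀ = (z - x₀) + t • u := by simp only [hcdef]; abel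
    calc ‖c t - x₀‖ = ‖(z - x₀) + t • u‖ := by rw [hct]
    _ ≤ ‖z - x₀‖ + ‖t • u‖ := norm_add_le _ _
    _ = ‖z - x₀‖ + t := by rw [norm_smul, hu_norm, Real.norm_eq_abs, abs_of_pos ht, mul_one]
  have hψt : ψ t < ψ 0 + t * (D / 2) := hkey t ht htδ
  have hεD : D / 2 + ε ≤ -σl / 4 := by
    rw [hεdef]; linarith
  have : g z ≤ g (c t) := hmin
  rw [hgdef] at this
  simp only at this
  have hht : ‖h (c t)‖ = ψ t := (hψeq t).symm
  have hfinal : ‖h z‖ + ε * ‖z - x₀‖ ≤ ψ t + ε * (‖z - x₀‖ + t) := by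
    calc ‖h z‖ + ε * ‖z - x₀‖ ≤ ‖h (c t)‖ + ε * ‖c t - x₀‖ := this
    _ ≤ ψ t + ε * (‖z - x₀‖ + t) := by
        rw [hht]; exact add_le_add (le_refl _) (mul_le_mul_of_nonneg_left hnormct hε.le)
  rw [hψ0] at hψt
  have hmul : t * (D / 2) + t * ε ≤ t * (-σl / 4) := by
    have h4 := mul_le_mul_of_nonneg_left hεD ht.le
    have h5 : t * (D / 2 + ε) = t * (D / 2) + t * ε := by ring
    linarith
  have hpos : 0 < t * (σl / 4) := by positivity
  have e1 : ε * (‖z - x₀‖ + t) = ε * ‖z - x₀‖ + t * ε := by ring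
  have e2 : t * (-σl / 4) = -(t * (σl / 4)) := by ring
  rw [e1] at hfinal
  rw [e2] at hmul
  linarith
end

section
/- Assume (A1): ‖Dh(x)*[y]‖ ≥ σ̲‖y‖ for all y ∈ ℝ^m and all x ∈ C := {x ∈ E : ‖h(x)‖ ≤ R}, with R, σ̲ > 0. Let φ(x) := ½‖h(x)‖² (so ∇φ(x) = Dh(x)*[h(x)]), and let z : [0, T) → E be a C¹ curve with z(0) ∈ C and z'(t) = −∇φ(z(t)) for all t ∈ [0, T). Then for every t ∈ [0, T): z(t) ∈ C, and ‖h(z(t))‖² ≤ ‖h(z(0))‖² · exp(−2σ̲²·t). Moreover the curve has finite length: ∫₀^T ‖z'(t)‖ dt ≤ √(2φ(z(0))) / σ̲ = ‖h(z(0))‖ / σ̲. -/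
open scoped ContDiff

theorem grad_formula' {E : Type*} [NormedAddCommGroup E] [InnerProductSpace ℝ E]
    [FiniteDimensional ℝ E]
    {m : ℕ} (h : E → EuclideanSpace ℝ (Fin m)) (hh : ContDiff ℝ ∞ h) (x : E) :
    HasGradientAt (fun y => (1 / 2 : ℝ) * ‖h y‖ ^ 2)
      (ContinuousLinearMap.adjoint (fderiv ℝ h x) (h x)) x := by
  have hdf : HasFDerivAt h (fderiv ℝ h x) x :=
    (hh.differentiable (by norm_num)).differentiableAt.hasFDerivAt
  have hinner := (hdf.inner ℝ hdf).const_mul (1 / 2 : ℝ)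
  rw [hasGradientAt_iff_hasFDerivAt]
  have heq : (fun y => (1 / 2 : ℝ) * ‖h y‖ ^ 2)
      = fun y => (1 / 2 : ℝ) * (inner ℝ (h y) (h y) : ℝ) := by
    funext y; rw [real_inner_self_eq_norm_sq]
  rw [heq]
  convert hinner using 1
  · rfl
  ext v
  simp only [InnerProductSpace.toDual_apply_apply, ContinuousLinearMap.smul_apply,
    ContinuousLinearMap.coe_comp', Function.comp_apply, ContinuousLinearMap.prod_apply,
    fderivInnerCLM_apply, ContinuousLinearMap.adjoint_inner_left, smul_eq_mul]
  rw [real_inner_comm (h x)]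
  ring

set_option maxHeartbeats 1000000 in
/-- Along the negative gradient flow of `φ(x) = ½‖h(x)‖²` started in
`C = {x : ‖h(x)‖ ≤ R}`, under (A1) the trajectory stays in `C`, the constraint violation
decays exponentially (`‖h(z(t))‖² ≤ ‖h(z(0))‖² e^{−2σ̲²t}`, via the Polyak–Łojasiewicz
inequality `½‖∇φ‖² ≥ σ̲²φ` on `C`), and the curve has finite length
`∫₀^T ‖z'(t)‖ dt ≤ √(2φ(z(0)))/σ̲ = ‖h(z(0))‖/σ̲`. -/
theorem gradient_flow_of_constraint_violation
    {E : Type*} [NormedAddCommGroup E] [InnerProductSpace ℝ E] [FiniteDimensional ℝ E]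
    {m : ℕ} (h : E → EuclideanSpace ℝ (Fin m)) (hh : ContDiff ℝ ∞ h)
    (R σl : ℝ) (hR : 0 < R) (hσ : 0 < σl)
    (hA1 : ∀ x : E, ‖h x‖ ≤ R → ∀ y : EuclideanSpace ℝ (Fin m),
      ‖ContinuousLinearMap.adjoint (fderiv ℝ h x) y‖ ≥ σl * ‖y‖)
    (T : ℝ) (z : ℝ → E) (hz0 : ‖h (z 0)‖ ≤ R)
    (hflow : ∀ t ∈ Set.Ico (0 : ℝ) T,
      HasDerivAt z (-(gradient (fun y => (1 / 2) * ‖h y‖ ^ 2) (z t))) t) :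
    (∀ t ∈ Set.Ico (0 : ℝ) T,
      ‖h (z t)‖ ≤ R ∧
      ‖h (z t)‖ ^ 2 ≤ ‖h (z 0)‖ ^ 2 * Real.exp (-2 * σl ^ 2 * t)) ∧
    ∫⁻ t in Set.Ico (0 : ℝ) T,
        ENNReal.ofReal ‖gradient (fun y => (1 / 2) * ‖h y‖ ^ 2) (z t)‖
      ≤ ENNReal.ofReal (‖h (z 0)‖ / σl) := by
  set G : E → E := fun x => ContinuousLinearMap.adjoint (fderiv ℝ h x) (h x) with hGdef
  have hgrad : ∀ x : E, gradient (fun y => (1 / 2 : ℝ) * ‖h y‖ ^ 2) x = G x :=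
    fun x => (grad_formula' h hh x).gradient
  -- derivative of v t = (1/2)‖h (z t)‖²
  set v : ℝ → ℝ := fun t => (1 / 2 : ℝ) * ‖h (z t)‖ ^ 2 with hvdef
  have hv : ∀ t ∈ Set.Ico (0 : ℝ) T, HasDerivAt v (-‖G (z t)‖ ^ 2) t := by
    intro t ht
    have hd := (grad_formula' h hh (z t)).hasFDerivAt.comp_hasDerivAt t (hflow t ht)
    have : (InnerProductSpace.toDual ℝ E (G (z t)))
        (-(gradient (fun y => (1 / 2 : ℝ) * ‖h y‖ ^ 2) (z t))) = -‖G (z t)‖ ^ 2 := by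
      rw [hgrad, InnerProductSpace.toDual_apply_apply, inner_neg_right, real_inner_self_eq_norm_sq]
    rw [this] at hd
    exact hd
  -- continuity of z on Ico 0 T
  have hzc : ∀ t ∈ Set.Ico (0 : ℝ) T, ContinuousAt z t := fun t ht => (hflow t ht).continuousAt
  -- Step A : v is antitone-ish : v t ≤ v 0
  have stepA : ∀ t ∈ Set.Ico (0 : ℝ) T, v t ≤ v 0 := by
    intro t ht
    rcases eq_or_lt_of_le ht.1 with h0 | h0
    · rw [← h0]
    have hsub : Set.Icc (0 : ℝ) t ⊆ Set.Ico (0 : ℝ) T :=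
      fun s hs => ⟨hs.1, lt_of_le_of_lt hs.2 ht.2⟩
    have hmono : AntitoneOn v (Set.Icc 0 t) := by
      apply antitoneOn_of_deriv_nonpos (convex_Icc 0 t)
      · exact fun s hs => ((hv s (hsub hs)).continuousAt).continuousWithinAt
      · intro s hs
        rw [interior_Icc] at hs
        exact (hv s (hsub ⟨le_of_lt hs.1, le_of_lt hs.2⟩)).differentiableAt.differentiableWithinAt
      · intro s hs
        rw [interior_Icc] at hs
        rw [(hv s (hsub ⟨le_of_lt hs.1, le_of_lt hs.2⟩)).deriv]
        simp [sq_nonneg]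
    exact hmono (Set.left_mem_Icc.2 (le_of_lt h0)) (Set.right_mem_Icc.2 (le_of_lt h0)) ht.1
  -- invariance
  have hC : ∀ t ∈ Set.Ico (0 : ℝ) T, ‖h (z t)‖ ≤ R := by
    intro t ht
    have := stepA t ht
    have hle : ‖h (z t)‖ ≤ ‖h (z 0)‖ := by
      simp only [hvdef] at this
      nlinarith [norm_nonneg (h (z t)), norm_nonneg (h (z 0))]
    exact hle.trans hz0
  -- PL inequality along the flow
  have hPL : ∀ t ∈ Set.Ico (0 : ℝ) T, σl * ‖h (z t)‖ ≤ ‖G (z t)‖ :=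
    fun t ht => hA1 (z t) (hC t ht) (h (z t))
  -- Step B : exponential decay
  have stepB : ∀ t ∈ Set.Ico (0 : ℝ) T,
      ‖h (z t)‖ ^ 2 ≤ ‖h (z 0)‖ ^ 2 * Real.exp (-2 * σl ^ 2 * t) := by
    intro t ht
    set ψ : ℝ → ℝ := fun s => v s * Real.exp (2 * σl ^ 2 * s) with hψdef
    have hψd : ∀ s ∈ Set.Ico (0 : ℝ) T,
        HasDerivAt ψ ((-‖G (z s)‖ ^ 2 + 2 * σl ^ 2 * v s) * Real.exp (2 * σl ^ 2 * s)) s := by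
      intro s hs
      have he : HasDerivAt (fun s : ℝ => Real.exp (2 * σl ^ 2 * s))
          (2 * σl ^ 2 * Real.exp (2 * σl ^ 2 * s)) s := by
        have he0 : HasDerivAt (fun x : ℝ => (2 * σl ^ 2) * x) (2 * σl ^ 2) s := by
          simpa using (hasDerivAt_id s).const_mul (2 * σl ^ 2)
        rw [show 2 * σl ^ 2 * Real.exp (2 * σl ^ 2 * s)
          = Real.exp (2 * σl ^ 2 * s) * (2 * σl ^ 2) from mul_comm _ _]
        exact he0.exp
      have h3 := (hv s hs).mul he
      have heq : -‖G (z s)‖ ^ 2 * Real.exp (2 * σl ^ 2 * s)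
          + v s * (2 * σl ^ 2 * Real.exp (2 * σl ^ 2 * s))
          = (-‖G (z s)‖ ^ 2 + 2 * σl ^ 2 * v s) * Real.exp (2 * σl ^ 2 * s) := by ring
      rw [heq] at h3; exact h3
    have hψmono : ψ t ≤ ψ 0 := by
      rcases eq_or_lt_of_le ht.1 with h0 | h0
      · rw [← h0]
      have hsub : Set.Icc (0 : ℝ) t ⊆ Set.Ico (0 : ℝ) T :=
        fun s hs => ⟨hs.1, lt_of_le_of_lt hs.2 ht.2⟩
      have hmono : AntitoneOn ψ (Set.Icc 0 t) := by
        apply antitoneOn_of_deriv_nonpos (convex_Icc 0 t)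
        · exact fun s hs => ((hψd s (hsub hs)).continuousAt).continuousWithinAt
        · intro s hs
          rw [interior_Icc] at hs
          exact (hψd s (hsub ⟨le_of_lt hs.1, le_of_lt hs.2⟩)).differentiableAt.differentiableWithinAt
        · intro s hs
          rw [interior_Icc] at hs
          have hs' : s ∈ Set.Ico (0 : ℝ) T := hsub ⟨le_of_lt hs.1, le_of_lt hs.2⟩
          rw [(hψd s hs').deriv]
          have hpl := hPL s hs'
          have : -‖G (z s)‖ ^ 2 + 2 * σl ^ 2 * v s ≤ 0 := by
            simp only [hvdef]
            have hsq : (σl * ‖h (z s)‖) ^ 2 ≤ ‖G (z s)‖ ^ 2 :=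
              pow_le_pow_left₀ (by positivity) hpl 2
            nlinarith [hsq]
          exact mul_nonpos_of_nonpos_of_nonneg this (Real.exp_pos _).le
      exact hmono (Set.left_mem_Icc.2 (le_of_lt h0)) (Set.right_mem_Icc.2 (le_of_lt h0)) ht.1
    have hexp : (0:ℝ) < Real.exp (2 * σl ^ 2 * t) := Real.exp_pos _
    simp only [hψdef, hvdef] at hψmono
    have h1 : ‖h (z t)‖ ^ 2 * Real.exp (2 * σl ^ 2 * t) ≤ ‖h (z 0)‖ ^ 2 := by
      have h2 : Real.exp (2 * σl ^ 2 * 0) = 1 := by norm_num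
      rw [h2] at hψmono
      linarith
    have h4 := mul_le_mul_of_nonneg_right h1 (inv_nonneg.2 hexp.le)
    rw [mul_assoc, mul_inv_cancel₀ (ne_of_gt hexp), mul_one] at h4
    rw [show (-2 * σl ^ 2 * t) = -(2 * σl ^ 2 * t) by ring, Real.exp_neg]
    exact h4
  refine ⟨fun t ht => ⟨hC t ht, stepB t ht⟩, ?_⟩
  -- derivative of the squared norm
  have hq : ∀ t ∈ Set.Ico (0:ℝ) T,
      HasDerivAt (fun u => ‖h (z u)‖ ^ 2) (-(2 * ‖G (z t)‖ ^ 2)) t := by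
    intro t ht
    have h2 := (hv t ht).const_mul (2:ℝ)
    simp only [hvdef] at h2
    have hfun : (fun u => (2:ℝ) * (1 / 2 * ‖h (z u)‖ ^ 2)) = fun u => ‖h (z u)‖ ^ 2 := by
      funext u; ring
    rw [hfun] at h2
    rw [show -(2 * ‖G (z t)‖ ^ 2) = 2 * -‖G (z t)‖ ^ 2 from by ring]
    exact h2
  have hGcont : Continuous G := by
    have h1 : Continuous (fderiv ℝ h) := hh.continuous_fderiv (by simp)
    have h2 : Continuous (fun x => ContinuousLinearMap.adjoint (fderiv ℝ h x)) :=
      (ContinuousLinearMap.adjoint (𝕜 := ℝ) (E := E)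
        (F := EuclideanSpace ℝ (Fin m))).toLinearIsometry.continuous.comp h1
    exact h2.clm_apply hh.continuous
  -- key bound on [0, s] for any s < T
  have key : ∀ s : ℝ, s < T → (∫⁻ t in Set.Ico (0:ℝ) s,
      ENNReal.ofReal ‖gradient (fun y => (1 / 2) * ‖h y‖ ^ 2) (z t)‖)
      ≤ ENNReal.ofReal (‖h (z 0)‖ / σl) := by
    intro s hsT
    rcases le_or_gt s 0 with hs0 | hs0
    · rw [Set.Ico_eq_empty (not_lt.2 hs0)]
      simp
    have hsub : Set.Icc (0:ℝ) s ⊆ Set.Ico (0:ℝ) T :=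
      fun r hr => ⟨hr.1, lt_of_le_of_lt hr.2 hsT⟩
    have hzcon : ContinuousOn z (Set.Icc 0 s) :=
      fun r hr => ((hflow r (hsub hr)).continuousAt).continuousWithinAt
    have hIcont : ContinuousOn (fun t => ‖G (z t)‖) (Set.Icc 0 s) :=
      (hGcont.comp_continuousOn hzcon).norm
    have hhz : ContinuousOn (fun t => ‖h (z t)‖) (Set.Icc 0 s) :=
      (hh.continuous.comp_continuousOn hzcon).norm
    -- bound on the operator norms
    obtain ⟨M, hM⟩ := isCompact_Icc.exists_bound_of_continuousOn
      (((ContinuousLinearMap.adjoint (𝕜 := ℝ) (E := E)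
        (F := EuclideanSpace ℝ (Fin m))).toLinearIsometry.continuous.comp
        (hh.continuous_fderiv (by simp))).comp_continuousOn hzcon)
    have hM0 : 0 ≤ M := (norm_nonneg _).trans (hM 0 ⟨le_refl 0, hs0.le⟩)
    have hGM : ∀ t ∈ Set.Icc (0:ℝ) s, ‖G (z t)‖ ≤ M * ‖h (z t)‖ := by
      intro t ht
      calc ‖G (z t)‖ ≤ ‖ContinuousLinearMap.adjoint (fderiv ℝ h (z t))‖ * ‖h (z t)‖ :=
            ContinuousLinearMap.le_opNorm _ _
        _ ≤ M * ‖h (z t)‖ := by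
            refine mul_le_mul_of_nonneg_right ?_ (norm_nonneg _)
            have h1 := hM t ht
            refine le_trans ?_ h1
            simp [Real.norm_eq_abs, le_abs_self]
    have hInt : IntervalIntegrable (fun t => ‖G (z t)‖) MeasureTheory.volume 0 s := by
      apply ContinuousOn.intervalIntegrable
      rwa [Set.uIcc_of_le hs0.le]
    -- ε-regularized estimate
    have hmain : ∀ ε : ℝ, 0 < ε →
        σl * ∫ t in (0:ℝ)..s, ‖G (z t)‖ ≤ ‖h (z 0)‖ + ε * (1 + σl * M * s) := by
      intro ε hε
      set w : ℝ → ℝ := fun t => Real.sqrt (‖h (z t)‖ ^ 2 + ε ^ 2) with hwdef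
      set dw : ℝ → ℝ :=
        fun t => -(2 * ‖G (z t)‖ ^ 2) / (2 * Real.sqrt (‖h (z t)‖ ^ 2 + ε ^ 2)) with hdwdef
      have hwpos : ∀ t : ℝ, 0 < Real.sqrt (‖h (z t)‖ ^ 2 + ε ^ 2) :=
        fun t => Real.sqrt_pos.2 (by positivity)
      have hwd : ∀ t ∈ Set.Icc (0:ℝ) s, HasDerivAt w (dw t) t := by
        intro t ht
        exact ((hq t (hsub ht)).add_const (ε ^ 2)).sqrt (by positivity)
      have hdwc : ContinuousOn dw (Set.Icc 0 s) := by
        apply ContinuousOn.div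
        · exact (continuousOn_const.mul (hIcont.pow 2)).neg
        · exact continuousOn_const.mul
            (Real.continuous_sqrt.comp_continuousOn ((hhz.pow 2).add continuousOn_const))
        · exact fun t ht => by positivity
      have hdwI : IntervalIntegrable dw MeasureTheory.volume 0 s := by
        apply ContinuousOn.intervalIntegrable
        rwa [Set.uIcc_of_le hs0.le]
      have hftc : ∫ t in (0:ℝ)..s, dw t = w s - w 0 :=
        intervalIntegral.integral_eq_sub_of_hasDerivAt
          (fun t ht => hwd t (by rwa [Set.uIcc_of_le hs0.le] at ht)) hdwI
      -- pointwise estimate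
      have hpt : ∀ t ∈ Set.Icc (0:ℝ) s, σl * ‖G (z t)‖ ≤ -dw t + σl * M * ε := by
        intro t ht
        have hWpos := hwpos t
        set a := ‖G (z t)‖ with hadef
        set g := ‖h (z t)‖ with hgdef
        set W := Real.sqrt (g ^ 2 + ε ^ 2) with hWdef
        have hW2 : W ^ 2 = g ^ 2 + ε ^ 2 := Real.sq_sqrt (by positivity)
        have hWg : g ≤ W := by
          have h1 := Real.sqrt_le_sqrt (show g ^ 2 ≤ g ^ 2 + ε ^ 2 by nlinarith)
          rwa [Real.sqrt_sq (norm_nonneg _)] at h1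
        have hWε : ε ≤ W := by
          have h1 := Real.sqrt_le_sqrt (show ε ^ 2 ≤ g ^ 2 + ε ^ 2 by nlinarith)
          rwa [Real.sqrt_sq hε.le] at h1
        have hpl := hPL t (hsub ht)
        have haM := hGM t ht
        have ha0 : 0 ≤ a := norm_nonneg _
        have hg0 : 0 ≤ g := norm_nonneg _
        have hdw : -dw t = a ^ 2 / W := by
          simp only [hdwdef]
          rw [neg_div, neg_neg, mul_div_mul_left _ _ (two_ne_zero)]
        rw [hdw, ← sub_le_iff_le_add, le_div_iff₀ hWpos]
        -- (σl * a - σl * M * ε) * W ≤ a ^ 2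
        have k1 : σl * a * g ≤ a * a := by nlinarith [hpl]
        have k2 : g * (W - g) ≤ ε ^ 2 := by
          nlinarith [mul_le_mul_of_nonneg_right hWg (Real.sqrt_nonneg (g ^ 2 + ε ^ 2))]
        have k3 : a * (W - g) ≤ M * g * (W - g) :=
          mul_le_mul_of_nonneg_right haM (sub_nonneg.2 hWg)
        have k4 : M * (g * (W - g)) ≤ M * ε ^ 2 := mul_le_mul_of_nonneg_left k2 hM0
        have k5 : ε * ε ≤ ε * W := mul_le_mul_of_nonneg_left hWε hε.le
        nlinarith [k1, mul_le_mul_of_nonneg_left k3 hσ.le,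
          mul_le_mul_of_nonneg_left k4 hσ.le,
          mul_le_mul_of_nonneg_left k5 (mul_nonneg hσ.le hM0)]
      -- integrate
      have hle : ∫ t in (0:ℝ)..s, σl * ‖G (z t)‖ ≤ ∫ t in (0:ℝ)..s, (-dw t + σl * M * ε) := by
        apply intervalIntegral.integral_mono_on hs0.le (hInt.const_mul σl)
          ((hdwI.neg).add intervalIntegrable_const)
        exact fun t ht => hpt t ht
      rw [intervalIntegral.integral_const_mul] at hle
      have ha : ∫ t in (0:ℝ)..s, (-dw t + σl * M * ε)
          = (∫ t in (0:ℝ)..s, -dw t) + ∫ t in (0:ℝ)..s, (σl * M * ε : ℝ) :=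
        intervalIntegral.integral_add hdwI.neg intervalIntegrable_const
      have hb : ∫ t in (0:ℝ)..s, -dw t = -∫ t in (0:ℝ)..s, dw t := intervalIntegral.integral_neg
      rw [ha, hb, hftc, intervalIntegral.integral_const] at hle
      have hw0 : w 0 ≤ ‖h (z 0)‖ + ε := by
        have h1 := Real.sqrt_le_sqrt
          (show ‖h (z 0)‖ ^ 2 + ε ^ 2 ≤ (‖h (z 0)‖ + ε) ^ 2 by nlinarith [norm_nonneg (h (z 0))])
        rwa [Real.sqrt_sq (by positivity)] at h1
      have hws : 0 ≤ w s := Real.sqrt_nonneg _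
      have : (s - 0) • (σl * M * ε) = σl * M * ε * s := by
        simp [smul_eq_mul]; ring
      rw [this] at hle
      calc σl * ∫ t in (0:ℝ)..s, ‖G (z t)‖ ≤ -(w s - w 0) + σl * M * ε * s := hle
        _ ≤ w 0 + σl * M * ε * s := by linarith
        _ ≤ ‖h (z 0)‖ + ε + σl * M * ε * s := by linarith
        _ = ‖h (z 0)‖ + ε * (1 + σl * M * s) := by ring
    -- let ε → 0
    have hc0 : (0:ℝ) < 1 + σl * M * s := by
      have : 0 ≤ σl * M * s := mul_nonneg (mul_nonneg hσ.le hM0) hs0.le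
      linarith
    have hIle : σl * ∫ t in (0:ℝ)..s, ‖G (z t)‖ ≤ ‖h (z 0)‖ := by
      by_contra hcon
      push_neg at hcon
      have hδ : (0:ℝ) < σl * (∫ t in (0:ℝ)..s, ‖G (z t)‖) - ‖h (z 0)‖ := by linarith
      have h5 := hmain ((σl * (∫ t in (0:ℝ)..s, ‖G (z t)‖) - ‖h (z 0)‖) / (2 * (1 + σl * M * s)))
        (div_pos hδ (by linarith))
      have heq : (σl * (∫ t in (0:ℝ)..s, ‖G (z t)‖) - ‖h (z 0)‖) / (2 * (1 + σl * M * s))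
          * (1 + σl * M * s)
          = (σl * (∫ t in (0:ℝ)..s, ‖G (z t)‖) - ‖h (z 0)‖) / 2 := by
        field_simp
      rw [heq] at h5
      linarith
    have hI2 : ∫ t in (0:ℝ)..s, ‖G (z t)‖ ≤ ‖h (z 0)‖ / σl := by
      rw [le_div_iff₀ hσ, mul_comm]
      exact hIle
    -- convert to lintegral
    have hIntOn : MeasureTheory.IntegrableOn (fun t => ‖G (z t)‖) (Set.Ico 0 s) :=
      (hIcont.integrableOn_Icc).mono_set Set.Ico_subset_Icc_self
    have hnn : 0 ≤ᵐ[MeasureTheory.volume.restrict (Set.Ico (0:ℝ) s)]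
        (fun t => ‖G (z t)‖) := Filter.Eventually.of_forall fun t => norm_nonneg _
    calc (∫⁻ t in Set.Ico (0:ℝ) s,
        ENNReal.ofReal ‖gradient (fun y => (1 / 2) * ‖h y‖ ^ 2) (z t)‖)
        = ∫⁻ t in Set.Ico (0:ℝ) s, ENNReal.ofReal ‖G (z t)‖ := by simp only [hgrad]
      _ = ENNReal.ofReal (∫ t in Set.Ico (0:ℝ) s, ‖G (z t)‖) :=
          (MeasureTheory.ofReal_integral_eq_lintegral_ofReal hIntOn hnn).symm
      _ ≤ ENNReal.ofReal (‖h (z 0)‖ / σl) := by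
          apply ENNReal.ofReal_le_ofReal
          rw [MeasureTheory.integral_Ico_eq_integral_Ioo,
            ← MeasureTheory.integral_Ioc_eq_integral_Ioo,
            ← intervalIntegral.integral_of_le hs0.le]
          exact hI2
  -- exhaust Ico 0 T by Ico 0 (u n)
  rcases le_or_gt T 0 with hT | hT
  · rw [Set.Ico_eq_empty (not_lt.2 hT)]
    simp
  obtain ⟨u, hu_mono, hu_lt, hu_tend⟩ := exists_seq_strictMono_tendsto T
  have hUnion : Set.Ico (0:ℝ) T = ⋃ n, Set.Ico (0:ℝ) (u n) := by
    ext t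
    simp only [Set.mem_iUnion, Set.mem_Ico]
    constructor
    · rintro ⟨ht0, htT⟩
      obtain ⟨n, hn⟩ := (hu_tend.eventually (eventually_gt_nhds htT)).exists
      exact ⟨n, ht0, hn⟩
    · rintro ⟨n, ht0, htn⟩
      exact ⟨ht0, htn.trans (hu_lt n)⟩
  have hmono2 : Monotone fun n => Set.Ico (0:ℝ) (u n) :=
    fun i j hij => Set.Ico_subset_Ico_right (hu_mono.monotone hij)
  have hdir : Directed (· ⊆ ·) (fun n => Set.Ico (0:ℝ) (u n)) := hmono2.directed_le
  rw [hUnion]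
  rw [MeasureTheory.setLIntegral_iUnion_of_directed _ hdir]
  exact iSup_le fun n => key (u n) (hu_lt n)
end
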